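/- Let (X,d) and (Y,d') be two complete metric invariant groups with identity elements e and e'. A map Φ : 𝒦(X) → 𝒦(Y) is a monoid isometric isomorphism (a bijection satisfying Φ(f ⊕ g) = Φ(f) ⊕ Φ(g) for all f,g, Φ(δ_e) = δ_{e'}, and d_∞(Φ(f), Φ(g)) = d_∞(f,g) for all f,g) if and only if there exists a bijective group homomorphism T : X → Y which is isometric (d'(T(x), T(y)) = d(x,y) for all x,y) such that Φ(f) = f ∘ T⁻¹ for all f ∈ 𝒦(X). -/

import Mathlib

/-- The inf-convolution of two real-valued functions on a group:
`(f ⊕ g)(x) = inf { f y + g z : y * z = x }`. -/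
noncomputable def infConv {X : Type*} [Mul X] (f g : X → ℝ) : X → ℝ :=
  fun x => sInf {r : ℝ | ∃ y z : X, y * z = x ∧ r = f y + g z}

/-- A Katetov map: `|f x − f y| ≤ d(x,y) ≤ f x + f y` for all `x, y`. -/
def IsKatetov {X : Type*} [MetricSpace X] (f : X → ℝ) : Prop :=
  ∀ x y : X, |f x - f y| ≤ dist x y ∧ dist x y ≤ f x + f y

/-- The sup-metric `d_∞(f,g) = sup_x |f x − g x|`. -/
noncomputable def dInf {X : Type*} (f g : X → ℝ) : ℝ :=
  ⨆ x : X, |f x - g x|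

/-!
A Katetov map vanishing at a point `x` is `δ_x := dist x`, and by completeness a Katetov map
whose infimum is `0` vanishes somewhere. In the monoid `(𝒦(X), ⊕, δ_e)` we have
`δ_x ⊕ δ_y = δ_{xy}`, and if `f ⊕ g = δ_e` then `inf f = 0`, so the units of `𝒦(X)` are exactly
the maps `δ_x`. A monoid isomorphism `Φ` permutes units, hence `Φ δ_x = δ_{T x}` for a group
isomorphism `T : X → Y`; and since `d_∞(f, δ_x) = f x`, preservation of `d_∞` gives
`Φ f (T x) = d_∞(Φ f, Φ δ_x) = d_∞(f, δ_x) = f x`, which also makes `T` an isometry.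
-/

open Function Filter Topology

theorem dInf_comp_of_surjective {X Y : Type*} {f g : X → ℝ} {φ : Y → X} (hφ : Surjective φ) :
    dInf (f ∘ φ) (g ∘ φ) = dInf f g :=
  hφ.iSup_comp fun x => |f x - g x|

section Katetov

variable {X : Type*} [MetricSpace X] {f : X → ℝ}

theorem injective_dist : Injective (dist : X → X → ℝ) := fun x y h =>
  dist_eq_zero.mp (by rw [h, dist_self])

theorem isKatetov_dist (x : X) : IsKatetov (dist x) := fun a b =>
  ⟨by simpa only [dist_comm x] using abs_dist_sub_le a b x,
    by simpa only [dist_comm x a] using dist_triangle a x b⟩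

theorem IsKatetov.nonneg (hf : IsKatetov f) (x : X) : 0 ≤ f x := by
  linarith [(hf x x).2, dist_self x]

theorem IsKatetov.lipschitzWith (hf : IsKatetov f) : LipschitzWith 1 f :=
  LipschitzWith.of_dist_le_mul fun x y => by simpa [Real.dist_eq] using (hf x y).1

theorem IsKatetov.comp_isometry {Y : Type*} [MetricSpace Y] (hf : IsKatetov f) {φ : Y → X}
    (hφ : Isometry φ) : IsKatetov (f ∘ φ) := fun a b => by
  simpa only [comp_apply, hφ.dist_eq] using hf (φ a) (φ b)

theorem IsKatetov.abs_sub_dist_le (hf : IsKatetov f) (x w : X) : |f w - dist x w| ≤ f x :=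
  abs_sub_le_iff.mpr
    ⟨by linarith [(abs_le.mp (hf w x).1).2, dist_comm w x], by linarith [(hf x w).2]⟩

theorem IsKatetov.eq_dist_of_eq_zero (hf : IsKatetov f) {x : X} (hx : f x = 0) : f = dist x :=
  funext fun w => sub_eq_zero.mp (abs_nonpos_iff.mp (hx ▸ hf.abs_sub_dist_le x w))

theorem IsKatetov.dInf_dist (hf : IsKatetov f) (x : X) : dInf f (dist x) = f x := by
  have : Nonempty X := ⟨x⟩
  unfold dInf
  refine le_antisymm (ciSup_le (hf.abs_sub_dist_le x)) ?_
  simpa [abs_of_nonneg (hf.nonneg x)] using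
    le_ciSup ⟨f x, Set.forall_mem_range.2 (hf.abs_sub_dist_le x)⟩ x

theorem IsKatetov.exists_eq_zero [CompleteSpace X] (hf : IsKatetov f)
    (h : ∀ ε > 0, ∃ y, f y < ε) : ∃ x, f x = 0 := by
  choose u hu using fun n : ℕ => h (1 / (n + 1)) Nat.one_div_pos_of_nat
  have hfu : Tendsto (f ∘ u) atTop (𝓝 0) :=
    squeeze_zero (fun n => hf.nonneg _) (fun n => (hu n).le) tendsto_one_div_add_atTop_nhds_zero_nat
  have hu_cauchy : CauchySeq u := by
    refine cauchySeq_of_le_tendsto_0' (fun n => 2 * (1 / ((n : ℝ) + 1))) (fun n m hnm => ?_) ?_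
    · have : 1 / ((m : ℝ) + 1) ≤ 1 / (n + 1) := Nat.one_div_le_one_div hnm
      linarith [(hf (u n) (u m)).2, hu n, hu m]
    · simpa using tendsto_one_div_add_atTop_nhds_zero_nat.const_mul (2 : ℝ)
  obtain ⟨x, hx⟩ := cauchySeq_tendsto_of_complete hu_cauchy
  exact ⟨x, tendsto_nhds_unique ((hf.lipschitzWith.continuous.tendsto x).comp hx) hfu⟩

end Katetov

section InfConv

variable {X : Type*} {f g : X → ℝ}

theorem infConv_le [Mul X] (hf : ∀ y, 0 ≤ f y) (hg : ∀ z, 0 ≤ g z) {x y z : X} (h : y * z = x) :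
    infConv f g x ≤ f y + g z :=
  csInf_le ⟨0, by rintro _ ⟨y, z, -, rfl⟩; exact add_nonneg (hf y) (hg z)⟩ ⟨y, z, h, rfl⟩

theorem infConv_comp_mulEquiv {Y : Type*} [Mul X] [Mul Y] (e : Y ≃* X) (f g : X → ℝ) :
    infConv (f ∘ e) (g ∘ e) = infConv f g ∘ e := by
  ext w
  refine congrArg sInf (Set.ext fun r => ⟨?_, ?_⟩)
  · rintro ⟨y, z, hyz, rfl⟩
    exact ⟨e y, e z, by rw [← map_mul, hyz], rfl⟩
  · rintro ⟨y, z, hyz, rfl⟩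
    exact ⟨e.symm y, e.symm z, by rw [← map_mul, hyz, e.symm_apply_apply], by simp⟩

variable [MulOneClass X] {x : X}

theorem infConv_set_nonempty (f g : X → ℝ) (x : X) :
    {r : ℝ | ∃ y z : X, y * z = x ∧ r = f y + g z}.Nonempty :=
  ⟨f x + g 1, x, 1, mul_one x, rfl⟩

theorem le_infConv {r : ℝ} (h : ∀ y z, y * z = x → r ≤ f y + g z) : r ≤ infConv f g x :=
  le_csInf (infConv_set_nonempty f g x) (by rintro _ ⟨y, z, hyz, rfl⟩; exact h y z hyz)

theorem exists_add_lt_of_infConv_lt {r : ℝ} (h : infConv f g x < r) :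
    ∃ y z, y * z = x ∧ f y + g z < r := by
  obtain ⟨_, ⟨y, z, hyz, rfl⟩, hr⟩ := exists_lt_of_csInf_lt (infConv_set_nonempty f g x) h
  exact ⟨y, z, hyz, hr⟩

end InfConv

section InvariantGroup

variable {X : Type*} [Group X] [MetricSpace X] {f g : X → ℝ}

theorem isIsometricSMul_of_dist_mul_left (h : ∀ x y z : X, dist (x * y) (x * z) = dist y z) :
    IsIsometricSMul X X :=
  ⟨fun x => Isometry.of_dist_eq (h x)⟩

theorem isIsometricSMul_op_of_dist_mul_right (h : ∀ x y z : X, dist (y * x) (z * x) = dist y z) :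
    IsIsometricSMul Xᵐᵒᵖ X :=
  ⟨fun x => Isometry.of_dist_eq (h x.unop)⟩

theorem dist_mul_mul_le_of_isIsometricSMul [IsIsometricSMul X X] [IsIsometricSMul Xᵐᵒᵖ X]
    (a b c d : X) : dist (a * b) (c * d) ≤ dist a c + dist b d :=
  calc dist (a * b) (c * d) ≤ dist (a * b) (c * b) + dist (c * b) (c * d) := dist_triangle _ _ _
    _ = dist a c + dist b d := by rw [dist_mul_right, dist_mul_left]

theorem infConv_dist_dist [IsIsometricSMul X X] [IsIsometricSMul Xᵐᵒᵖ X] (x y : X) :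
    infConv (dist x) (dist y) = dist (x * y) := funext fun w =>
  le_antisymm
    (calc infConv (dist x) (dist y) w ≤ dist x x + dist y (x⁻¹ * w) :=
          infConv_le (fun _ => dist_nonneg) (fun _ => dist_nonneg) (mul_inv_cancel_left x w)
      _ = dist (x * y) w := by rw [dist_self, zero_add, ← dist_mul_left x, mul_inv_cancel_left])
    (le_infConv fun u v huv => huv ▸ dist_mul_mul_le_of_isIsometricSMul x y u v)

theorem IsKatetov.infConv_le_infConv_add_dist [IsIsometricSMul X X] (hf : IsKatetov f)
    (hg : IsKatetov g) (a b : X) : infConv f g a ≤ infConv f g b + dist a b := by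
  have : infConv f g a - dist a b ≤ infConv f g b := le_infConv fun y z hyz => by
    have h₁ := infConv_le hf.nonneg hg.nonneg (mul_inv_cancel_left y a)
    have h₂ : dist (y⁻¹ * a) z = dist a b := by rw [← dist_mul_left y, mul_inv_cancel_left, hyz]
    linarith [(abs_le.mp (hg (y⁻¹ * a) z).1).2]
  linarith

theorem IsKatetov.dist_le_infConv_add_infConv [IsIsometricSMul X X] [IsIsometricSMul Xᵐᵒᵖ X]
    (hf : IsKatetov f) (hg : IsKatetov g) (a b : X) :
    dist a b ≤ infConv f g a + infConv f g b := by
  have : dist a b - infConv f g b ≤ infConv f g a := le_infConv fun y z hyz => by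
    have : dist a b - (f y + g z) ≤ infConv f g b := le_infConv fun y' z' hyz' => by
      have := dist_mul_mul_le_of_isIsometricSMul y z y' z'
      rw [hyz, hyz'] at this
      linarith [(hf y y').2, (hg z z').2]
    linarith
  linarith

theorem isKatetov_infConv [IsIsometricSMul X X] [IsIsometricSMul Xᵐᵒᵖ X] (hf : IsKatetov f)
    (hg : IsKatetov g) : IsKatetov (infConv f g) := fun a b =>
  ⟨abs_sub_le_iff.mpr ⟨by linarith [hf.infConv_le_infConv_add_dist hg a b],
      by linarith [hf.infConv_le_infConv_add_dist hg b a, dist_comm a b]⟩,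
    hf.dist_le_infConv_add_infConv hg a b⟩

theorem IsKatetov.exists_eq_dist_of_infConv_eq [CompleteSpace X] (hf : IsKatetov f)
    (hg : IsKatetov g) (h : infConv f g = dist (1 : X)) : ∃ x, f = dist x := by
  obtain ⟨x, hx⟩ := hf.exists_eq_zero fun ε hε => by
    have hε' : infConv f g 1 < ε := by rwa [h, dist_self]
    obtain ⟨y, z, -, hyz⟩ := exists_add_lt_of_infConv_lt hε'
    exact ⟨y, by linarith [hg.nonneg z]⟩
  exact ⟨x, hf.eq_dist_of_eq_zero hx⟩

end InvariantGroup

structure IsKatetovMonoidIsometricIso {X Y : Type*} [Group X] [MetricSpace X] [Group Y]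
    [MetricSpace Y] (Φ : (X → ℝ) → (Y → ℝ)) : Prop where
  bijOn : Set.BijOn Φ {f | IsKatetov f} {g | IsKatetov g}
  map_infConv : ∀ f g, IsKatetov f → IsKatetov g → Φ (infConv f g) = infConv (Φ f) (Φ g)
  map_dist_one : Φ (dist 1) = dist 1
  map_dInf : ∀ f g, IsKatetov f → IsKatetov g → dInf (Φ f) (Φ g) = dInf f g

namespace IsKatetovMonoidIsometricIso

variable {X Y : Type*} [Group X] [MetricSpace X] [Group Y] [MetricSpace Y]
  {Φ : (X → ℝ) → (Y → ℝ)}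

theorem of_eq_comp_symm [IsIsometricSMul X X] [IsIsometricSMul Xᵐᵒᵖ X] (T : X ≃* Y)
    (hT : Isometry T) (hΦ : ∀ f, IsKatetov f → Φ f = f ∘ T.symm) :
    IsKatetovMonoidIsometricIso Φ := by
  have hT_symm : Isometry T.symm := hT.right_inv T.right_inv
  refine ⟨⟨fun f hf => ?_, fun f hf g hg h => ?_, fun g hg => ?_⟩, fun f g hf hg => ?_, ?_,
    fun f g hf hg => ?_⟩
  · show IsKatetov (Φ f)
    rw [hΦ f hf]
    exact hf.comp_isometry hT_symm
  · rw [hΦ f hf, hΦ g hg] at h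
    exact T.symm.surjective.injective_comp_right h
  · refine ⟨g ∘ T, hg.comp_isometry hT, ?_⟩
    rw [hΦ _ (hg.comp_isometry hT), comp_assoc, T.self_comp_symm, comp_id]
  · rw [hΦ _ (isKatetov_infConv hf hg), hΦ f hf, hΦ g hg, infConv_comp_mulEquiv]
  · rw [hΦ _ (isKatetov_dist 1)]
    funext y
    simpa using hT_symm.dist_eq 1 y
  · rw [hΦ f hf, hΦ g hg]
    exact dInf_comp_of_surjective T.symm.surjective

theorem apply_eq_of_map_dist_eq (hΦ : IsKatetovMonoidIsometricIso Φ) {T : X → Y}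
    (hT : ∀ x, Φ (dist x) = dist (T x)) {f : X → ℝ} (hf : IsKatetov f) (x : X) :
    Φ f (T x) = f x := by
  rw [← IsKatetov.dInf_dist (hΦ.bijOn.mapsTo hf), ← hT,
    hΦ.map_dInf _ _ hf (isKatetov_dist x), hf.dInf_dist]

theorem exists_map_dist_eq_dist [IsIsometricSMul X X] [IsIsometricSMul Xᵐᵒᵖ X] [CompleteSpace Y]
    (hΦ : IsKatetovMonoidIsometricIso Φ) (x : X) : ∃ y, Φ (dist x) = dist y := by
  refine IsKatetov.exists_eq_dist_of_infConv_eq (hΦ.bijOn.mapsTo (isKatetov_dist x))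
    (hΦ.bijOn.mapsTo (isKatetov_dist x⁻¹)) ?_
  rw [← hΦ.map_infConv _ _ (isKatetov_dist x) (isKatetov_dist x⁻¹), infConv_dist_dist,
    mul_inv_cancel, hΦ.map_dist_one]

theorem surjective_of_map_dist_eq [IsIsometricSMul X X] [IsIsometricSMul Xᵐᵒᵖ X] [CompleteSpace X]
    [IsIsometricSMul Y Y] [IsIsometricSMul Yᵐᵒᵖ Y] (hΦ : IsKatetovMonoidIsometricIso Φ)
    {T : X → Y} (hT : ∀ x, Φ (dist x) = dist (T x)) : Surjective T := by
  intro y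
  obtain ⟨f, hf, hfy⟩ := hΦ.bijOn.surjOn (isKatetov_dist y)
  obtain ⟨g, hg, hgy⟩ := hΦ.bijOn.surjOn (isKatetov_dist y⁻¹)
  have hfg : infConv f g = dist 1 :=
    hΦ.bijOn.injOn (isKatetov_infConv hf hg) (isKatetov_dist 1) <| by
      rw [hΦ.map_infConv f g hf hg, hfy, hgy, infConv_dist_dist, mul_inv_cancel, hΦ.map_dist_one]
  obtain ⟨x, rfl⟩ := hf.exists_eq_dist_of_infConv_eq hg hfg
  exact ⟨x, injective_dist (by rw [← hT, hfy])⟩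

theorem exists_mulEquiv [IsIsometricSMul X X] [IsIsometricSMul Xᵐᵒᵖ X] [CompleteSpace X]
    [IsIsometricSMul Y Y] [IsIsometricSMul Yᵐᵒᵖ Y] [CompleteSpace Y]
    (hΦ : IsKatetovMonoidIsometricIso Φ) :
    ∃ T : X ≃* Y, Isometry T ∧ ∀ f, IsKatetov f → Φ f = f ∘ T.symm := by
  choose T hT using hΦ.exists_map_dist_eq_dist
  have hT_mul (x y : X) : T (x * y) = T x * T y := injective_dist <| by
    rw [← hT, ← infConv_dist_dist (T x), ← hT, ← hT,
      ← hΦ.map_infConv _ _ (isKatetov_dist x) (isKatetov_dist y), infConv_dist_dist]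
  have hT_inj : Injective T := fun x y h => injective_dist <|
    hΦ.bijOn.injOn (isKatetov_dist x) (isKatetov_dist y) (by rw [hT, hT, h])
  let e := MulEquiv.mk' (Equiv.ofBijective T ⟨hT_inj, hΦ.surjective_of_map_dist_eq hT⟩) hT_mul
  refine ⟨e, Isometry.of_dist_eq fun x y => ?_, fun f hf => funext fun y => ?_⟩
  · exact (congrFun (hT x).symm (T y)).trans (hΦ.apply_eq_of_map_dist_eq hT (isKatetov_dist x) y)
  · obtain ⟨x, rfl⟩ := e.surjective y
    rw [comp_apply, e.symm_apply_apply]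
    exact hΦ.apply_eq_of_map_dist_eq hT hf x

end IsKatetovMonoidIsometricIso

/-- for complete metric invariant groups `X`, `Y`, a map
`Φ : 𝒦(X) → 𝒦(Y)` is a monoid isometric isomorphism (a bijection of `𝒦(X)` onto
`𝒦(Y)` preserving `⊕`, the identity element and `d_∞`) iff there is an isometric
bijective group homomorphism `T : X → Y` with `Φ(f) = f ∘ T⁻¹` for all `f ∈ 𝒦(X)`. -/
theorem katetov_banach_stone {X Y : Type*}
    [Group X] [MetricSpace X] [CompleteSpace X]
    [Group Y] [MetricSpace Y] [CompleteSpace Y]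
    (hleftX : ∀ x y z : X, dist (x * y) (x * z) = dist y z)
    (hrightX : ∀ x y z : X, dist (y * x) (z * x) = dist y z)
    (hleftY : ∀ x y z : Y, dist (x * y) (x * z) = dist y z)
    (hrightY : ∀ x y z : Y, dist (y * x) (z * x) = dist y z)
    (Φ : (X → ℝ) → (Y → ℝ)) :
    ((∀ f : X → ℝ, IsKatetov f → IsKatetov (Φ f)) ∧
     (∀ f g : X → ℝ, IsKatetov f → IsKatetov g → Φ f = Φ g → f = g) ∧
     (∀ g : Y → ℝ, IsKatetov g → ∃ f : X → ℝ, IsKatetov f ∧ Φ f = g) ∧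
     (∀ f g : X → ℝ, IsKatetov f → IsKatetov g → Φ (infConv f g) = infConv (Φ f) (Φ g)) ∧
     Φ (fun x => dist (1 : X) x) = (fun y => dist (1 : Y) y) ∧
     (∀ f g : X → ℝ, IsKatetov f → IsKatetov g → dInf (Φ f) (Φ g) = dInf f g)) ↔
    (∃ T : X ≃* Y, (∀ x y : X, dist (T x) (T y) = dist x y) ∧
       ∀ f : X → ℝ, IsKatetov f → Φ f = f ∘ T.symm) := by
  have := isIsometricSMul_of_dist_mul_left hleftX
  have := isIsometricSMul_op_of_dist_mul_right hrightX
  have := isIsometricSMul_of_dist_mul_left hleftY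
  have := isIsometricSMul_op_of_dist_mul_right hrightY
  constructor
  · rintro ⟨hK, hInj, hSurj, hMul, hId, hIso⟩
    obtain ⟨T, hT, hΦ⟩ := IsKatetovMonoidIsometricIso.exists_mulEquiv
      ⟨⟨fun f => hK f, fun f hf g hg => hInj f g hf hg, hSurj⟩, hMul, hId, hIso⟩
    exact ⟨T, hT.dist_eq, hΦ⟩
  · rintro ⟨T, hT, hΦ⟩
    have h := IsKatetovMonoidIsometricIso.of_eq_comp_symm T (Isometry.of_dist_eq hT) hΦ
    exact ⟨fun f hf => h.bijOn.mapsTo hf, fun f g hf hg hfg => h.bijOn.injOn hf hg hfg,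
      fun g hg => h.bijOn.surjOn hg, h.map_infConv, h.map_dist_one, h.map_dInf⟩
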